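/- For a linear map L: ℝ² → ℝ² sending a nondegenerate triangle ΔABC to ΔA'B'C' (preserving the vertex correspondence), the singular values λ₁, λ₂ of L satisfy λ₁² + λ₂² = (a'² cot A + b'² cot B + c'² cot C)/(2 area(ΔABC)), where a, b, c (resp. a', b', c') are the side lengths of ΔABC (resp. ΔA'B'C') opposite the corresponding vertices, and A, B, C are the angles of ΔABC. -/

import Mathlib

/-! The cotangent of the angle at a vertex is the dot product of the two edges leaving it divided
by twice the area, i.e. by `|det|` of the edge vectors, and `l1² + l2² = tr (Mᵀ M)` by orthogonal
invariance of the trace. In the edge vectors `B - A`, `C - A` and the entries of `M` the formula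
then becomes a polynomial identity. -/

open Matrix

/-- The Euclidean distance between two points of the plane (as `Fin 2 → ℝ`). -/
noncomputable def edist2 (x y : Fin 2 → ℝ) : ℝ :=
  Real.sqrt ((x 0 - y 0) ^ 2 + (x 1 - y 1) ^ 2)

/-- The angle opposite the side of length `a` in a Euclidean triangle with side lengths
`a, b, c`, via the law of cosines. -/
noncomputable def angleOf (a b c : ℝ) : ℝ :=
  Real.arccos ((b ^ 2 + c ^ 2 - a ^ 2) / (2 * b * c))

/-- The cotangent. -/
noncomputable def cotan (x : ℝ) : ℝ := Real.cos x / Real.sin x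

open Real

theorem trace_transpose_mul_self_of_svd {n R : Type*} [Fintype n] [DecidableEq n] [CommRing R]
    (U W : Matrix n n R) (d : n → R) (hU : U * Uᵀ = 1) (hW : W * Wᵀ = 1) :
    trace ((U * diagonal d * W)ᵀ * (U * diagonal d * W)) = ∑ i, d i ^ 2 := by
  have hUU : Uᵀ * U = 1 := mul_eq_one_comm.mp hU
  calc trace ((U * diagonal d * W)ᵀ * (U * diagonal d * W))
      = trace (Wᵀ * (diagonal d * (Uᵀ * U) * diagonal d) * W) := by
        simp only [transpose_mul, diagonal_transpose, Matrix.mul_assoc]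
    _ = trace (diagonal d * diagonal d * (W * Wᵀ)) := by
        rw [hUU, Matrix.mul_one, trace_mul_cycle, trace_mul_comm]
    _ = ∑ i, d i ^ 2 := by
        simp only [hW, Matrix.mul_one, diagonal_mul_diagonal, trace_diagonal, sq]

theorem cotan_arccos_div_sqrt (x y : ℝ) (hy : y ≠ 0) :
    cotan (arccos (x / √(x ^ 2 + y ^ 2))) = x / |y| := by
  have hs : 0 < √(x ^ 2 + y ^ 2) := sqrt_pos.mpr (by positivity)
  have hx : |x / √(x ^ 2 + y ^ 2)| ≤ 1 := by
    rw [abs_div, abs_of_pos hs, div_le_one hs]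
    exact abs_le_sqrt (by nlinarith [sq_nonneg y])
  have hsin : 1 - (x / √(x ^ 2 + y ^ 2)) ^ 2 = (|y| / √(x ^ 2 + y ^ 2)) ^ 2 := by
    rw [div_pow, div_pow, sq_abs, sq_sqrt (by positivity)]
    field_simp
    ring
  rw [cotan, cos_arccos (abs_le.mp hx).1 (abs_le.mp hx).2, sin_arccos, hsin,
    sqrt_sq (by positivity)]
  field_simp

theorem det_of_sub_cycle (X Y Z : Fin 2 → ℝ) :
    det (of ![Z - Y, X - Y]) = det (of ![Y - X, Z - X]) := by
  simp only [det_fin_two, of_apply, Matrix.cons_val_zero, Matrix.cons_val_one, Pi.sub_apply]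
  ring

theorem dotProduct_self_mul_dotProduct_self (u v : Fin 2 → ℝ) :
    (u ⬝ᵥ u) * (v ⬝ᵥ v) = (u ⬝ᵥ v) ^ 2 + det (of ![u, v]) ^ 2 := by
  simp only [dotProduct, Fin.sum_univ_two, det_fin_two, of_apply, Matrix.cons_val_zero,
    Matrix.cons_val_one]
  ring

theorem edist2_eq_sqrt (x y : Fin 2 → ℝ) : edist2 x y = √((y - x) ⬝ᵥ (y - x)) := by
  simp only [edist2, dotProduct, Fin.sum_univ_two, Pi.sub_apply]
  ring_nf

theorem edist2_sq (x y : Fin 2 → ℝ) : edist2 x y ^ 2 = (y - x) ⬝ᵥ (y - x) := by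
  rw [edist2_eq_sqrt, sq_sqrt (by simpa using dotProduct_self_star_nonneg (y - x))]

theorem edist2_comm (x y : Fin 2 → ℝ) : edist2 x y = edist2 y x := by
  simp only [edist2]
  ring_nf

theorem angleOf_comm (a b c : ℝ) : angleOf a b c = angleOf a c b := by
  simp only [angleOf]
  ring_nf

theorem cotan_angleOf_edist2 (X Y Z : Fin 2 → ℝ) (h : det (of ![Y - X, Z - X]) ≠ 0) :
    cotan (angleOf (edist2 Y Z) (edist2 X Z) (edist2 X Y))
      = ((Y - X) ⬝ᵥ (Z - X)) / |det (of ![Y - X, Z - X])| := by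
  have hcos : edist2 X Z ^ 2 + edist2 X Y ^ 2 - edist2 Y Z ^ 2 = 2 * ((Y - X) ⬝ᵥ (Z - X)) := by
    simp only [edist2_sq, dotProduct, Fin.sum_univ_two, Pi.sub_apply]
    ring
  have hprod : edist2 X Z * edist2 X Y
      = √(((Y - X) ⬝ᵥ (Z - X)) ^ 2 + det (of ![Y - X, Z - X]) ^ 2) := by
    rw [← dotProduct_self_mul_dotProduct_self, mul_comm, sqrt_mul, ← edist2_eq_sqrt,
      ← edist2_eq_sqrt]
    simpa using dotProduct_self_star_nonneg (Y - X)
  rw [angleOf, hcos, mul_assoc, hprod, mul_div_mul_left _ _ two_ne_zero]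
  exact cotan_arccos_div_sqrt _ _ h

theorem trace_transpose_mul_self_mul_det_sq (M : Matrix (Fin 2) (Fin 2) ℝ) (A B C : Fin 2 → ℝ) :
    trace (Mᵀ * M) * det (of ![B - A, C - A]) ^ 2
      = (M *ᵥ (C - B)) ⬝ᵥ (M *ᵥ (C - B)) * ((B - A) ⬝ᵥ (C - A))
        + (M *ᵥ (C - A)) ⬝ᵥ (M *ᵥ (C - A)) * ((C - B) ⬝ᵥ (A - B))
        + (M *ᵥ (B - A)) ⬝ᵥ (M *ᵥ (B - A)) * ((A - C) ⬝ᵥ (B - C)) := by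
  simp only [trace_fin_two, mul_apply, transpose_apply, mulVec, dotProduct, Fin.sum_univ_two,
    det_fin_two, of_apply, Matrix.cons_val_zero, Matrix.cons_val_one, Pi.sub_apply]
  ring

theorem singular_value_sum_sq_formula_general
    (M U W : Matrix (Fin 2) (Fin 2) ℝ) (l1 l2 : ℝ)
    (hU : U * Uᵀ = 1) (hW : W * Wᵀ = 1)
    (hsvd : M = U * Matrix.diagonal ![l1, l2] * W)
    (A B C A' B' C' : Fin 2 → ℝ)
    (hnd : Matrix.det (Matrix.of ![B - A, C - A]) ≠ 0)
    (hB : M.mulVec (B - A) = B' - A') (hC : M.mulVec (C - A) = C' - A') :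
    l1 ^ 2 + l2 ^ 2 =
      ((edist2 B' C') ^ 2 * cotan (angleOf (edist2 B C) (edist2 A C) (edist2 A B))
        + (edist2 A' C') ^ 2 * cotan (angleOf (edist2 A C) (edist2 B C) (edist2 A B))
        + (edist2 A' B') ^ 2 * cotan (angleOf (edist2 A B) (edist2 B C) (edist2 A C)))
      / (2 * (|Matrix.det (Matrix.of ![B - A, C - A])| / 2)) := by
  have hcotA := cotan_angleOf_edist2 A B C hnd
  have hcotB := cotan_angleOf_edist2 B C A (by rwa [det_of_sub_cycle])
  have hcotC := cotan_angleOf_edist2 C A B (by rwa [det_of_sub_cycle, det_of_sub_cycle])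
  rw [det_of_sub_cycle, edist2_comm C A, edist2_comm B A, angleOf_comm] at hcotB
  rw [det_of_sub_cycle, det_of_sub_cycle, edist2_comm C B, edist2_comm C A] at hcotC
  have hBC : C' - B' = M *ᵥ (C - B) := by
    rw [← sub_sub_sub_cancel_right C B A, mulVec_sub, hB, hC, sub_sub_sub_cancel_right]
  have htrace : trace (Mᵀ * M) = l1 ^ 2 + l2 ^ 2 := by
    rw [hsvd, trace_transpose_mul_self_of_svd U W _ hU hW, Fin.sum_univ_two]
    rfl
  have hd : |det (of ![B - A, C - A])| ≠ 0 := abs_ne_zero.mpr hnd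
  rw [hcotA, hcotB, hcotC, edist2_sq, edist2_sq, edist2_sq, hBC, ← hB, ← hC, ← htrace,
    mul_div_cancel₀ _ two_ne_zero, eq_div_iff hd]
  field_simp
  rw [sq_abs, trace_transpose_mul_self_mul_det_sq]

/-- Pinkall–Polthier formula: for a linear map `M = U · diag(l1,l2) · W` (singular values
`l1, l2`) sending a nondegenerate triangle `ΔABC` to `ΔA'B'C'` preserving the vertex
correspondence, `l1² + l2² = (a'² cot A + b'² cot B + c'² cot C)/(2 area(ΔABC))`. -/
theorem singular_value_sum_sq_formula
    (M U W : Matrix (Fin 2) (Fin 2) ℝ) (l1 l2 : ℝ)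
    (hl1 : 0 ≤ l1) (hl2 : 0 ≤ l2)
    (hU : U * Uᵀ = 1) (hW : W * Wᵀ = 1)
    (hsvd : M = U * Matrix.diagonal ![l1, l2] * W)
    (A B C A' B' C' : Fin 2 → ℝ)
    (hnd : Matrix.det (Matrix.of ![B - A, C - A]) ≠ 0)
    (hB : M.mulVec (B - A) = B' - A') (hC : M.mulVec (C - A) = C' - A') :
    l1 ^ 2 + l2 ^ 2 =
      ((edist2 B' C') ^ 2 * cotan (angleOf (edist2 B C) (edist2 A C) (edist2 A B))
        + (edist2 A' C') ^ 2 * cotan (angleOf (edist2 A C) (edist2 B C) (edist2 A B))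
        + (edist2 A' B') ^ 2 * cotan (angleOf (edist2 A B) (edist2 B C) (edist2 A C)))
      / (2 * (|Matrix.det (Matrix.of ![B - A, C - A])| / 2)) :=
  singular_value_sum_sq_formula_general M U W l1 l2 hU hW hsvd A B C A' B' C' hnd hB hC
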